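/- Every word u over {a,B,C,D} of length at most |w_n| that is a subword of some w_m (for any m) is already a subword of w_{n+3}. -/
import Mathlib


inductive GLetter | a | B | C | D
deriving DecidableEq

def alphaN (n : ℕ) : GLetter :=
  if n % 3 = 0 then GLetter.B else if n % 3 = 1 then GLetter.D else GLetter.C

def w : ℕ → List GLetter
  | 0 => []
  | 1 => [GLetter.a]
  | (n+2) => w (n+1) ++ [alphaN (n+1)] ++ w (n+1)

lemma alphaN_mod {j k : ℕ} (h : j % 3 = k % 3) : alphaN j = alphaN k := by
  unfold alphaN; rw [h]

lemma alphaN_cover (n k : ℕ) : ∃ j, n ≤ j ∧ j ≤ n + 2 ∧ alphaN j = alphaN k := by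
  refine ⟨n + (k % 3 + 3 - n % 3) % 3, by omega, by omega, alphaN_mod (by omega)⟩

lemma w_succ (k : ℕ) (hk : 1 ≤ k) : w (k + 1) = w k ++ [alphaN k] ++ w k := by
  obtain ⟨j, rfl⟩ : ∃ j, k = j + 1 := ⟨k - 1, by omega⟩
  rfl

lemma w_prefix_succ (k : ℕ) : w k <+: w (k + 1) := by
  rcases Nat.eq_zero_or_pos k with h | h
  · subst h; exact List.nil_prefix
  · rw [w_succ k h, List.append_assoc]; exact (w k).prefix_append _

lemma w_suffix_succ (k : ℕ) : w k <:+ w (k + 1) := by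
  rcases Nat.eq_zero_or_pos k with h | h
  · subst h; exact List.nil_suffix
  · rw [w_succ k h]; exact ⟨w k ++ [alphaN k], rfl⟩

lemma w_prefix {n m : ℕ} (h : n ≤ m) : w n <+: w m := by
  induction m, h using Nat.le_induction with
  | base => exact List.prefix_refl _
  | succ m hm ih => exact ih.trans (w_prefix_succ m)

lemma w_suffix {n m : ℕ} (h : n ≤ m) : w n <:+ w m := by
  induction m, h using Nat.le_induction with
  | base => exact List.suffix_refl _
  | succ m hm ih => exact ih.trans (w_suffix_succ m)

lemma sandwich {n k : ℕ} (hn : 1 ≤ n) (hnk : n ≤ k) :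
    w n ++ [alphaN k] ++ w n <:+: w (k + 1) := by
  obtain ⟨x, hx⟩ := w_suffix hnk
  obtain ⟨y, hy⟩ := w_prefix hnk
  refine ⟨x, y, ?_⟩
  rw [w_succ k (le_trans hn hnk)]
  calc x ++ (w n ++ [alphaN k] ++ w n) ++ y
      = (x ++ w n) ++ [alphaN k] ++ (w n ++ y) := by simp [List.append_assoc]
    _ = w k ++ [alphaN k] ++ w k := by rw [hx, hy]

lemma letter_infix {n k : ℕ} (hn : 1 ≤ n) (hnk : n ≤ k) (hk : k ≤ n + 2) :
    w n ++ [alphaN k] ++ w n <:+: w (n + 3) := by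
  exact (sandwich hn hnk).trans (w_prefix (by omega)).isInfix

lemma drop_decomp {α : Type*} (s u t : List α) {j : ℕ} (hj : j ≤ s.length) :
    (s ++ u ++ t).drop j = s.drop j ++ u ++ t := by
  rw [List.append_assoc, List.drop_append,
    Nat.sub_eq_zero_of_le hj, List.drop_zero, ← List.append_assoc]

lemma infix_take {α : Type*} (s u t : List α) {q : ℕ} (hq : s.length + u.length ≤ q) :
    u <:+: (s ++ u ++ t).take q := by
  rw [List.take_append, List.take_append,
    List.take_of_length_le (by omega : s.length ≤ q),
    List.take_of_length_le (by omega : u.length ≤ q - s.length)]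
  exact ⟨s, _, by rw [List.append_assoc]⟩

lemma main_ind (n : ℕ) (hn : 1 ≤ n) :
    ∀ m u, u.length ≤ (w n).length → u <:+: w m → u <:+: w (n + 3) := by
  intro m
  induction m with
  | zero =>
    intro u _ h
    rw [show w 0 = [] from rfl, List.infix_nil] at h
    subst h
    exact List.nil_infix
  | succ k ih =>
    intro u hlen hu
    by_cases hk : k + 1 ≤ n + 3
    · exact hu.trans (w_prefix hk).isInfix
    · have hk1 : 1 ≤ k := by omega
      have hnk : n ≤ k := by omega
      rw [w_succ k hk1] at hu
      obtain ⟨s, t, hst⟩ := hu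
      set L := (w k).length with hLdef
      set ℓ := (w n).length with hldef
      have hL : ℓ ≤ L := (w_prefix hnk).length_le
      have hlens : s.length + u.length + t.length = L + 1 + L := by
        have := congrArg List.length hst
        simp [hLdef] at this
        omega
      rcases le_or_gt (s.length + u.length) L with h1 | h1
      · -- u lies in the first copy of w k
        apply ih u hlen
        have h2 : u <:+: (w k ++ [alphaN k] ++ w k).take L := by
          rw [← hst]; exact infix_take s u t h1
        rwa [show (w k ++ [alphaN k] ++ w k).take L = w k by
          rw [List.append_assoc]; exact List.take_left' rfl] at h2
      rcases le_or_gt (L + 1) s.length with h2 | h2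
      · -- u lies in the second copy of w k
        apply ih u hlen
        have h3 : u <:+: (w k ++ [alphaN k] ++ w k).drop (L + 1) := by
          rw [← hst, drop_decomp s u t h2]
          exact ⟨s.drop (L + 1), t, rfl⟩
        rwa [show (w k ++ [alphaN k] ++ w k).drop (L + 1) = w k from
          List.drop_left' (by simp [hLdef])] at h3
      · -- u straddles the middle letter
        have hj : L - ℓ ≤ s.length := by omega
        have h3 : u <:+: ((w k ++ [alphaN k] ++ w k).drop (L - ℓ)).take (2 * ℓ + 1) := by
          rw [← hst, drop_decomp s u t hj]
          exact infix_take _ u t (by simp; omega)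
        obtain ⟨x, hx⟩ := w_suffix hnk
        obtain ⟨y, hy⟩ := w_prefix hnk
        have hxlen : x.length = L - ℓ := by
          have := congrArg List.length hx
          simp [hLdef, hldef] at this ⊢
          omega
        have hwin : ((w k ++ [alphaN k] ++ w k).drop (L - ℓ)).take (2 * ℓ + 1)
            = w n ++ [alphaN k] ++ w n := by
          conv_lhs => rw [show w k ++ [alphaN k] ++ w k = x ++ (w n ++ [alphaN k] ++ w k) by
            rw [← hx]; simp [List.append_assoc]]
          rw [List.drop_left' hxlen]
          rw [show w n ++ [alphaN k] ++ w k = (w n ++ [alphaN k]) ++ w k from rfl]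
          rw [List.take_append,
            List.take_of_length_le (by simp [hldef]; omega)]
          have : 2 * ℓ + 1 - (w n ++ [alphaN k]).length = ℓ := by simp [hldef]; omega
          rw [this, show (w k).take ℓ = w n by rw [← hy, List.take_left' rfl]]
        rw [hwin] at h3
        obtain ⟨j, hj1, hj2, hj3⟩ := alphaN_cover n k
        rw [← hj3] at h3
        exact h3.trans (letter_infix hn hj1 hj2)

theorem stmt3 : ∀ n m : ℕ, 1 ≤ n → 1 ≤ m → ∀ u : List GLetter,
    u.length ≤ (w n).length → u <:+: w m → u <:+: w (n + 3) := by
  intro n m hn _ u hlen hu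
  exact main_ind n hn m u hlen hu
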